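/- arXiv:1604.05218 — 4 statements merged into one kernel-verified Lean document; each statement's English description precedes it below -/
import Mathlib

section
/- Let d ≥ 1 and let p be a polynomial in d+1 real variables (with complex coefficients) that is homogeneous of degree n and harmonic, i.e. ∑_{i=1}^{d+1} ∂²p/∂x_i² = 0 identically. Then the indicator function of the upper hemisphere observes p with constant 1/√2: ∫_{S^d ∩ {x_{d+1}>0}} |p(x)|² dσ(x) = ∫_{S^d ∩ {x_{d+1}<0}} |p(x)|² dσ(x) = (1/2) ∫_{S^d} |p(x)|² dσ(x). -/
/-!
The antipodal map `x ↦ -x` of the sphere preserves surface measure and exchanges the two open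
hemispheres, while the equator is a null set. Since `p(-x) = (-1)ⁿ p(x)` for `p` homogeneous of
degree `n`, the density `|p|²` is even, so each hemisphere carries exactly half of its integral.
-/

open MeasureTheory Metric Set
open scoped Pointwise

theorem MvPolynomial.IsHomogeneous.eval_smul {σ R : Type*} [CommSemiring R]
    {p : MvPolynomial σ R} {n : ℕ} (hp : p.IsHomogeneous n) (c : R) (x : σ → R) :
    eval (c • x) p = c ^ n * eval x p := by
  rw [eval_eq, eval_eq, Finset.mul_sum]
  refine Finset.sum_congr rfl fun m hm => ?_
  have hdeg : m.degree = n := by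
    rw [Finsupp.degree_eq_weight_one]; exact hp (mem_support_iff.mp hm)
  simp only [Pi.smul_apply, smul_eq_mul, mul_pow, Finset.prod_mul_distrib,
    Finset.prod_pow_eq_pow_sum, ← Finsupp.degree_apply, hdeg]
  ring

namespace MeasureTheory.Measure

variable {E : Type*} [NormedAddCommGroup E] [NormedSpace ℝ E] [MeasurableSpace E]
  [BorelSpace E] (μ : Measure E)

theorem measurePreserving_neg_toSphere [μ.IsNegInvariant] :
    MeasurePreserving (fun x : sphere (0 : E) 1 => -x) μ.toSphere μ.toSphere := by
  refine ⟨continuous_neg.measurable, ?_⟩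
  ext s hs
  rw [map_apply continuous_neg.measurable hs, toSphere_apply' _ hs,
    toSphere_apply' _ (continuous_neg.measurable hs)]
  have himage : ((↑) '' ((fun x : sphere (0 : E) 1 => -x) ⁻¹' s) : Set E) = -((↑) '' s) := by
    ext y
    constructor
    · rintro ⟨x, hx, rfl⟩
      exact ⟨-x, hx, by simp⟩
    · rintro ⟨z, hz, hzy⟩
      exact ⟨-z, by simpa using hz, by simp [hzy]⟩
  rw [himage, Set.smul_neg, measure_neg]

theorem toSphere_setOf_eq_zero [FiniteDimensional ℝ E] [μ.IsAddHaarMeasure]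
    {ℓ : E →L[ℝ] ℝ} (hℓ : ℓ ≠ 0) : μ.toSphere {x | ℓ (x : E) = 0} = 0 := by
  have hker : LinearMap.ker (ℓ : E →ₗ[ℝ] ℝ) ≠ ⊤ := by
    refine fun htop => hℓ (ContinuousLinearMap.ext fun x => ?_)
    simpa using (htop ▸ Submodule.mem_top : x ∈ LinearMap.ker (ℓ : E →ₗ[ℝ] ℝ))
  have hcone : Ioo (0 : ℝ) 1 • ((↑) '' {x : sphere (0 : E) 1 | ℓ (x : E) = 0} : Set E)
      ⊆ LinearMap.ker (ℓ : E →ₗ[ℝ] ℝ) := by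
    rintro _ ⟨c, -, _, ⟨x, hx, rfl⟩, rfl⟩
    simp_all
  rw [toSphere_apply' _ (isClosed_eq (by fun_prop) continuous_const).measurableSet,
    measure_mono_null hcone (addHaar_submodule μ _ hker), mul_zero]

variable {G : Type*} [NormedAddCommGroup G] [NormedSpace ℝ G]

theorem setIntegral_toSphere_pos_eq_neg [μ.IsNegInvariant] (ℓ : E →L[ℝ] ℝ)
    {f : sphere (0 : E) 1 → G} (hf : f.Even) :
    ∫ x in {x | 0 < ℓ (x : E)}, f x ∂μ.toSphere
      = ∫ x in {x | ℓ (x : E) < 0}, f x ∂μ.toSphere := by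
  have hneg := (measurePreserving_neg_toSphere μ).setIntegral_preimage_emb
    (MeasurableEquiv.ofInvolutive _ neg_involutive continuous_neg.measurable).measurableEmbedding
    f {x | 0 < ℓ (x : E)}
  have hpre : (fun x : sphere (0 : E) 1 => -x) ⁻¹' {x | 0 < ℓ (x : E)}
      = {x : sphere (0 : E) 1 | ℓ (x : E) < 0} := by
    ext x; simp
  rw [hpre] at hneg
  simpa only [funext hf] using hneg.symm

theorem setIntegral_toSphere_pos_eq_half_integral [FiniteDimensional ℝ E] [μ.IsAddHaarMeasure]
    {ℓ : E →L[ℝ] ℝ} (hℓ : ℓ ≠ 0) {f : sphere (0 : E) 1 → G}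
    (hfi : Integrable f μ.toSphere) (hf : f.Even) :
    ∫ x in {x | 0 < ℓ (x : E)}, f x ∂μ.toSphere = (1 / 2 : ℝ) • ∫ x, f x ∂μ.toSphere := by
  have hcont : Continuous fun x : sphere (0 : E) 1 => ℓ (x : E) := by fun_prop
  have hcover : ({x | 0 < ℓ (x : E)} ∪ {x | ℓ (x : E) < 0} : Set (sphere (0 : E) 1))
      =ᵐ[μ.toSphere] univ := by
    refine ae_eq_univ.mpr (measure_mono_null (fun x hx => ?_) (toSphere_setOf_eq_zero μ hℓ))
    simp only [mem_compl_iff, mem_union, mem_ofPred_eq, not_or, not_lt] at hx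
    exact le_antisymm hx.1 hx.2
  have hsplit : ∫ x, f x ∂μ.toSphere
      = ∫ x in {x | 0 < ℓ (x : E)}, f x ∂μ.toSphere
        + ∫ x in {x | ℓ (x : E) < 0}, f x ∂μ.toSphere := by
    rw [← setIntegral_univ, ← restrict_congr_set hcover,
      setIntegral_union (s := {x : sphere (0 : E) 1 | 0 < ℓ (x : E)})
        (t := {x : sphere (0 : E) 1 | ℓ (x : E) < 0})
        (disjoint_left.mpr fun _ h₁ h₂ => lt_asymm (α := ℝ) h₁ h₂)
        (isOpen_lt hcont continuous_const).measurableSet hfi.integrableOn hfi.integrableOn]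
  rw [hsplit, ← setIntegral_toSphere_pos_eq_neg μ ℓ hf, ← two_smul ℝ, smul_smul]
  norm_num

end MeasureTheory.Measure

theorem spherical_harmonic_equidistribution_general
    (d n : ℕ) (p : MvPolynomial (Fin (d + 1)) ℂ)
    (hhom : p.IsHomogeneous n) :
    (∫ x in {x : Metric.sphere (0 : EuclideanSpace ℝ (Fin (d + 1))) 1 |
        0 < (x : EuclideanSpace ℝ (Fin (d + 1))) (Fin.last d)},
      ‖MvPolynomial.eval
        (fun i => ((x : EuclideanSpace ℝ (Fin (d + 1))) i : ℂ)) p‖ ^ 2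
      ∂(volume : Measure (EuclideanSpace ℝ (Fin (d + 1)))).toSphere)
    = (∫ x in {x : Metric.sphere (0 : EuclideanSpace ℝ (Fin (d + 1))) 1 |
        (x : EuclideanSpace ℝ (Fin (d + 1))) (Fin.last d) < 0},
      ‖MvPolynomial.eval
        (fun i => ((x : EuclideanSpace ℝ (Fin (d + 1))) i : ℂ)) p‖ ^ 2
      ∂(volume : Measure (EuclideanSpace ℝ (Fin (d + 1)))).toSphere)
    ∧
    (∫ x in {x : Metric.sphere (0 : EuclideanSpace ℝ (Fin (d + 1))) 1 |
        0 < (x : EuclideanSpace ℝ (Fin (d + 1))) (Fin.last d)},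
      ‖MvPolynomial.eval
        (fun i => ((x : EuclideanSpace ℝ (Fin (d + 1))) i : ℂ)) p‖ ^ 2
      ∂(volume : Measure (EuclideanSpace ℝ (Fin (d + 1)))).toSphere)
    = (1 / 2) * ∫ x : Metric.sphere (0 : EuclideanSpace ℝ (Fin (d + 1))) 1,
      ‖MvPolynomial.eval
        (fun i => ((x : EuclideanSpace ℝ (Fin (d + 1))) i : ℂ)) p‖ ^ 2
      ∂(volume : Measure (EuclideanSpace ℝ (Fin (d + 1)))).toSphere := by
  let ℓ := EuclideanSpace.proj (𝕜 := ℝ) (ι := Fin (d + 1)) (Fin.last d)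
  have hℓ : ℓ ≠ 0 := fun h => by
    simpa [ℓ] using congr($h (EuclideanSpace.single (Fin.last d) 1))
  let f (x : sphere (0 : EuclideanSpace ℝ (Fin (d + 1))) 1) : ℝ :=
    ‖MvPolynomial.eval (fun i => ((x : EuclideanSpace ℝ (Fin (d + 1))) i : ℂ)) p‖ ^ 2
  have hf_even : f.Even := fun x => by
    have hcoords : (fun i => (((-x : sphere (0 : EuclideanSpace ℝ (Fin (d + 1))) 1) :
        EuclideanSpace ℝ (Fin (d + 1))) i : ℂ))
        = (-1 : ℂ) • fun i => ((x : EuclideanSpace ℝ (Fin (d + 1))) i : ℂ) := by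
      ext i; simp
    simp only [f, hcoords, hhom.eval_smul, norm_mul, norm_pow, norm_neg, norm_one, one_pow,
      one_mul]
  have hf_int : Integrable f (volume : Measure (EuclideanSpace ℝ (Fin (d + 1)))).toSphere :=
    (((MvPolynomial.continuous_eval p).comp (by fun_prop)).norm.pow 2)
      |>.integrable_of_hasCompactSupport (.of_compactSpace f)
  exact ⟨Measure.setIntegral_toSphere_pos_eq_neg _ ℓ hf_even,
    Measure.setIntegral_toSphere_pos_eq_half_integral _ hℓ hf_int hf_even⟩

/-- Observability of spherical harmonics by the upper hemisphere: a harmonic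
polynomial `p` in `d+1` variables, homogeneous of degree `n`, has its `L²` mass
on the unit sphere `S^d` equally distributed on the two open hemispheres. -/
theorem spherical_harmonic_equidistribution
    (d n : ℕ) (hd : 1 ≤ d) (p : MvPolynomial (Fin (d + 1)) ℂ)
    (hhom : p.IsHomogeneous n)
    (hharm : (∑ i : Fin (d + 1),
      MvPolynomial.pderiv i (MvPolynomial.pderiv i p)) = 0) :
    (∫ x in {x : Metric.sphere (0 : EuclideanSpace ℝ (Fin (d + 1))) 1 |
        0 < (x : EuclideanSpace ℝ (Fin (d + 1))) (Fin.last d)},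
      ‖MvPolynomial.eval
        (fun i => ((x : EuclideanSpace ℝ (Fin (d + 1))) i : ℂ)) p‖ ^ 2
      ∂(volume : Measure (EuclideanSpace ℝ (Fin (d + 1)))).toSphere)
    = (∫ x in {x : Metric.sphere (0 : EuclideanSpace ℝ (Fin (d + 1))) 1 |
        (x : EuclideanSpace ℝ (Fin (d + 1))) (Fin.last d) < 0},
      ‖MvPolynomial.eval
        (fun i => ((x : EuclideanSpace ℝ (Fin (d + 1))) i : ℂ)) p‖ ^ 2
      ∂(volume : Measure (EuclideanSpace ℝ (Fin (d + 1)))).toSphere)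
    ∧
    (∫ x in {x : Metric.sphere (0 : EuclideanSpace ℝ (Fin (d + 1))) 1 |
        0 < (x : EuclideanSpace ℝ (Fin (d + 1))) (Fin.last d)},
      ‖MvPolynomial.eval
        (fun i => ((x : EuclideanSpace ℝ (Fin (d + 1))) i : ℂ)) p‖ ^ 2
      ∂(volume : Measure (EuclideanSpace ℝ (Fin (d + 1)))).toSphere)
    = (1 / 2) * ∫ x : Metric.sphere (0 : EuclideanSpace ℝ (Fin (d + 1))) 1,
      ‖MvPolynomial.eval
        (fun i => ((x : EuclideanSpace ℝ (Fin (d + 1))) i : ℂ)) p‖ ^ 2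
      ∂(volume : Measure (EuclideanSpace ℝ (Fin (d + 1)))).toSphere :=
  spherical_harmonic_equidistribution_general d n p hhom
end

section
/- Let ρ : ℝ → ℝ be continuous with 0 < ρ(x) ≤ 1 for all x and ρ(x) < 1 for all x ≠ 0. Let λ ≥ 0 and k ∈ ℝ with k ≠ 0 and |k| ≥ λ. Suppose w : ℝ → ℂ is twice continuously differentiable, w and w' belong to L²(ℝ), w satisfies −w''(x) + k² w(x) = λ² ρ(x)² w(x) for all x ∈ ℝ, and w(x) → 0, w'(x) → 0 as |x| → ∞. Then w is identically zero. -/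
/-!
With `q = k² - λ²ρ² ≥ 0` the equation reads `w'' = q w`. The energy `⟪w, w'⟫` then has derivative
`‖w'‖² + q ‖w‖² ≥ 0`, so it is monotone; tending to `0` at both ends, it vanishes identically.
Hence its derivative vanishes too, forcing `w' ≡ 0`, and the constant `w` is its limit `0`.
-/

open Filter MeasureTheory
open scoped InnerProductSpace

lemma Monotone.eq_of_tendsto_atBot_atTop {α β : Type*} [TopologicalSpace α] [PartialOrder α]
    [OrderClosedTopology α] [Preorder β] [IsDirectedOrder β] [IsCodirectedOrder β] {f : β → α}
    {a : α} (hf : Monotone f) (hbot : Tendsto f atBot (nhds a)) (htop : Tendsto f atTop (nhds a))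
    (b : β) : f b = a :=
  le_antisymm (hf.ge_of_tendsto htop b) (hf.le_of_tendsto hbot b)

section SecondOrderODE

variable {E : Type*} [NormedAddCommGroup E] [InnerProductSpace ℝ E] {q : ℝ → ℝ} {w : ℝ → E}

lemma hasDerivAt_inner_self_deriv (hw : ContDiff ℝ 2 w)
    (heq : ∀ x, deriv (deriv w) x = q x • w x) (x : ℝ) :
    HasDerivAt (fun t => ⟪w t, deriv w t⟫_ℝ) (‖deriv w x‖ ^ 2 + q x * ‖w x‖ ^ 2) x := by
  have hw' : ContDiff ℝ 1 (deriv w) := (contDiff_succ_iff_deriv.mp hw).2.2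
  have h := ((hw.differentiable two_ne_zero x).hasDerivAt).inner ℝ
    ((hw'.differentiable one_ne_zero x).hasDerivAt)
  rwa [heq x, inner_smul_right, real_inner_self_eq_norm_sq, real_inner_self_eq_norm_sq,
    add_comm] at h

theorem eq_zero_of_deriv_deriv_eq_smul (hq : ∀ x, 0 ≤ q x) (hw : ContDiff ℝ 2 w)
    (heq : ∀ x, deriv (deriv w) x = q x • w x)
    (hlim_top : Tendsto w atTop (nhds 0)) (hlim_bot : Tendsto w atBot (nhds 0))
    (hlim'_top : Tendsto (deriv w) atTop (nhds 0))
    (hlim'_bot : Tendsto (deriv w) atBot (nhds 0)) (x : ℝ) :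
    w x = 0 := by
  set energy : ℝ → ℝ := fun t => ⟪w t, deriv w t⟫_ℝ
  have henergy' (t : ℝ) : HasDerivAt energy (‖deriv w t‖ ^ 2 + q t * ‖w t‖ ^ 2) t :=
    hasDerivAt_inner_self_deriv hw heq t
  have henergy'_nonneg (t : ℝ) : 0 ≤ ‖deriv w t‖ ^ 2 + q t * ‖w t‖ ^ 2 := by
    have := hq t
    positivity
  have hmono : Monotone energy :=
    monotone_of_hasDerivAt_nonneg henergy' henergy'_nonneg
  have henergy_zero : energy = 0 := by
    funext t
    refine hmono.eq_of_tendsto_atBot_atTop ?_ ?_ t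
    · simpa using hlim_bot.inner (𝕜 := ℝ) hlim'_bot
    · simpa using hlim_top.inner (𝕜 := ℝ) hlim'_top
  have hderiv_zero (t : ℝ) : deriv w t = 0 := by
    have h : ‖deriv w t‖ ^ 2 + q t * ‖w t‖ ^ 2 = 0 :=
      (henergy' t).unique (by rw [henergy_zero]; exact hasDerivAt_const t 0)
    have : ‖deriv w t‖ ^ 2 = 0 := by nlinarith [hq t, sq_nonneg ‖w t‖, sq_nonneg ‖deriv w t‖]
    simpa using this
  have hconst : w = fun _ => w x :=
    funext fun t => is_const_of_deriv_eq_zero (hw.differentiable two_ne_zero) hderiv_zero t x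
  rw [hconst] at hlim_top
  exact tendsto_nhds_unique tendsto_const_nhds hlim_top

end SecondOrderODE

theorem no_eigenfunction_with_large_rotation_number_general
    (ρ : ℝ → ℝ)
    (hρpos : ∀ x, 0 < ρ x) (hρle : ∀ x, ρ x ≤ 1)
    (lam k : ℝ) (hlam : 0 ≤ lam) (hklam : lam ≤ |k|)
    (w : ℝ → ℂ) (hw : ContDiff ℝ 2 w)
    (heq : ∀ x, -(deriv (deriv w) x) + (k : ℂ) ^ 2 * w x
      = (lam : ℂ) ^ 2 * (ρ x : ℂ) ^ 2 * w x)
    (hlim_top : Tendsto w atTop (nhds 0))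
    (hlim_bot : Tendsto w atBot (nhds 0))
    (hlim'_top : Tendsto (deriv w) atTop (nhds 0))
    (hlim'_bot : Tendsto (deriv w) atBot (nhds 0)) :
    ∀ x, w x = 0 := by
  have hlam_sq : lam ^ 2 ≤ k ^ 2 := by
    simpa only [sq_abs] using pow_le_pow_left₀ hlam hklam 2
  have hq (x : ℝ) : 0 ≤ k ^ 2 - lam ^ 2 * ρ x ^ 2 := by
    have hρ_sq : ρ x ^ 2 ≤ 1 := pow_le_one₀ (hρpos x).le (hρle x)
    nlinarith [sq_nonneg lam]
  refine eq_zero_of_deriv_deriv_eq_smul hq hw (fun x => ?_) hlim_top hlim_bot hlim'_top hlim'_bot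
  rw [Complex.real_smul]
  push_cast
  linear_combination -heq x

/-- On a Zoll surface of revolution, there is no separated Laplacian
eigenfunction with rotation number `|k| ≥ λ`, `k ≠ 0`: any decaying
`L²` solution of `-w'' + k²w = λ²ρ²w` vanishes identically. -/
theorem no_eigenfunction_with_large_rotation_number
    (ρ : ℝ → ℝ) (hρcont : Continuous ρ)
    (hρpos : ∀ x, 0 < ρ x) (hρle : ∀ x, ρ x ≤ 1)
    (hρlt : ∀ x, x ≠ 0 → ρ x < 1)
    (lam k : ℝ) (hlam : 0 ≤ lam) (hk : k ≠ 0) (hklam : lam ≤ |k|)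
    (w : ℝ → ℂ) (hw : ContDiff ℝ 2 w)
    (hwL2 : MemLp w 2 (volume : Measure ℝ))
    (hw'L2 : MemLp (deriv w) 2 (volume : Measure ℝ))
    (heq : ∀ x, -(deriv (deriv w) x) + (k : ℂ) ^ 2 * w x
      = (lam : ℂ) ^ 2 * (ρ x : ℂ) ^ 2 * w x)
    (hlim_top : Tendsto w atTop (nhds 0))
    (hlim_bot : Tendsto w atBot (nhds 0))
    (hlim'_top : Tendsto (deriv w) atTop (nhds 0))
    (hlim'_bot : Tendsto (deriv w) atBot (nhds 0)) :
    ∀ x, w x = 0 :=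
  no_eigenfunction_with_large_rotation_number_general ρ hρpos hρle lam k hlam hklam w hw heq
    hlim_top hlim_bot hlim'_top hlim'_bot
end

section
/- Let h > 0, let V : ℝ → ℝ be continuous, let Φ : ℝ → ℝ be Lipschitz (so Φ' exists almost everywhere), and let u : ℝ → ℂ be twice continuously differentiable with compact support. Then h² ∫_ℝ |(e^{Φ/h} u)'(x)|² dx + ∫_ℝ ( V(x) − Φ'(x)² ) e^{2Φ(x)/h} |u(x)|² dx = Re ∫_ℝ e^{2Φ(x)/h} ( −h² u''(x) + V(x) u(x) ) · conj(u(x)) dx. -/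
/-!
At every point where `Φ` is differentiable, expanding `|(e^{Φ/h} u)'|²` shows that the
difference of the two sides' integrands is `h² (e^{2Φ/h} Re(ū u'))'`. The function
`e^{2Φ/h} Re(ū u')` is locally Lipschitz with compact support, hence absolutely continuous on
every interval, so its almost-everywhere derivative integrates to zero.
-/

open MeasureTheory Set

theorem LocallyLipschitz.absolutelyContinuousOnInterval {X : Type*} [PseudoMetricSpace X]
    {f : ℝ → X} (hf : LocallyLipschitz f) (a b : ℝ) :
    AbsolutelyContinuousOnInterval f a b := by
  obtain ⟨K, hK⟩ := hf.locallyLipschitzOn.exists_lipschitzOnWith_of_compact isCompact_uIcc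
  exact hK.absolutelyContinuousOnInterval

theorem integral_deriv_eq_zero_of_hasCompactSupport {F : ℝ → ℝ}
    (hF : ∀ a b, AbsolutelyContinuousOnInterval F a b) (hc : HasCompactSupport F) :
    ∫ x, deriv F x = 0 := by
  obtain ⟨R, hR, hsub⟩ := hc.isCompact.isBounded.subset_ball_lt 0 0
  rw [Real.ball_eq_Ioo, zero_sub, zero_add] at hsub
  have hout : ∀ x ∉ Ioo (-R) R, F x = 0 := fun x hx =>
    image_eq_zero_of_notMem_tsupport fun hx' => hx (hsub hx')
  have hderiv_out : ∀ x ∉ Ioc (-R) R, deriv F x = 0 := fun x hx =>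
    Function.notMem_support.mp fun hx' =>
      hx (Ioo_subset_Ioc_self (hsub (support_deriv_subset hx')))
  rw [← setIntegral_eq_integral_of_forall_compl_eq_zero hderiv_out,
    ← intervalIntegral.integral_of_le (by linarith), (hF (-R) R).integral_deriv_eq_sub,
    hout R (by simp), hout (-R) (by simp), sub_zero]

theorem LocallyLipschitz.integral_deriv_mul_eq_zero {f g : ℝ → ℝ} (hf : LocallyLipschitz f)
    (hg : LocallyLipschitz g) (hgc : HasCompactSupport g) :
    ∫ x, deriv (fun x => f x * g x) x = 0 :=
  integral_deriv_eq_zero_of_hasCompactSupport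
    (fun a b => (hf.absolutelyContinuousOnInterval a b).fun_mul
      (hg.absolutelyContinuousOnInterval a b)) hgc.mul_left

theorem HasDerivAt.re_conj_mul {f g : ℝ → ℂ} {f' g' : ℂ} {x : ℝ}
    (hf : HasDerivAt f f' x) (hg : HasDerivAt g g' x) :
    HasDerivAt (fun y => (starRingEnd ℂ (f y) * g y).re)
      (starRingEnd ℂ f' * g x + starRingEnd ℂ (f x) * g').re x := by
  simp only [starRingEnd_apply]
  exact Complex.reCLM.hasFDerivAt.comp_hasDerivAt x (hf.star.mul hg)

section Weight

variable {h : ℝ} {Φ : ℝ → ℝ} {u : ℝ → ℂ} {x : ℝ}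

theorem hasDerivAt_exp_div_mul (hΦ : DifferentiableAt ℝ Φ x) (hu : DifferentiableAt ℝ u x) :
    HasDerivAt (fun y => (Real.exp (Φ y / h) : ℂ) * u y)
      ((Real.exp (Φ x / h) * (deriv Φ x / h) : ℝ) * u x
        + (Real.exp (Φ x / h) : ℂ) * deriv u x) x :=
  ((hΦ.hasDerivAt.div_const h).exp.ofReal_comp).mul hu.hasDerivAt

theorem integrable_norm_deriv_exp_div_mul_sq {K : NNReal} (hΦ : LipschitzWith K Φ)
    (hu : ContDiff ℝ 1 u) (hsupp : HasCompactSupport u) :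
    Integrable fun x => ‖deriv (fun y => (Real.exp (Φ y / h) : ℂ) * u y) x‖ ^ 2 := by
  have hbound_cont : Continuous fun x =>
      (Real.exp (Φ x / h) * (K / |h| * ‖u x‖ + ‖deriv u x‖)) ^ 2 := by
    have := hΦ.continuous; have := hu.continuous_deriv le_rfl; have := hu.continuous
    fun_prop
  have hbound_supp : HasCompactSupport fun x =>
      (Real.exp (Φ x / h) * (K / |h| * ‖u x‖ + ‖deriv u x‖)) ^ 2 :=
    ((hsupp.norm.mul_left.add hsupp.deriv.norm).mul_left).comp_left (g := fun t : ℝ => t ^ 2)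
      (zero_pow two_ne_zero)
  refine (hbound_cont.integrable_of_hasCompactSupport hbound_supp).mono'
    ((measurable_deriv _).norm.pow_const 2).aestronglyMeasurable ?_
  filter_upwards [hΦ.ae_differentiableAt (μ := volume)] with x hx
  rw [(hasDerivAt_exp_div_mul hx (hu.differentiable one_ne_zero x)).deriv, norm_pow, norm_norm]
  refine pow_le_pow_left₀ (norm_nonneg _) ((norm_add_le _ _).trans ?_) 2
  simp only [norm_mul, Complex.norm_real, Real.norm_eq_abs, abs_of_pos (Real.exp_pos _),
    abs_div]
  rw [mul_assoc, ← mul_add]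
  gcongr
  exact norm_deriv_le_of_lipschitz hΦ

theorem integrable_sub_deriv_sq_mul_exp_mul_norm_sq {V : ℝ → ℝ} {K : NNReal}
    (hV : Continuous V) (hΦ : LipschitzWith K Φ) (hu : Continuous u)
    (hsupp : HasCompactSupport u) :
    Integrable fun x => (V x - deriv Φ x ^ 2) * Real.exp (2 * Φ x / h) * ‖u x‖ ^ 2 := by
  have hbound_cont : Continuous fun x =>
      (|V x| + (K : ℝ) ^ 2) * Real.exp (2 * Φ x / h) * ‖u x‖ ^ 2 := by
    have := hΦ.continuous
    fun_prop
  have hbound_supp : HasCompactSupport fun x =>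
      (|V x| + (K : ℝ) ^ 2) * Real.exp (2 * Φ x / h) * ‖u x‖ ^ 2 :=
    (hsupp.norm.comp_left (g := fun t : ℝ => t ^ 2) (zero_pow two_ne_zero)).mul_left
  have hmeas : Measurable fun x =>
      (V x - deriv Φ x ^ 2) * Real.exp (2 * Φ x / h) * ‖u x‖ ^ 2 := by
    have := measurable_deriv Φ; have := hΦ.continuous.measurable
    fun_prop
  refine (hbound_cont.integrable_of_hasCompactSupport hbound_supp).mono'
    hmeas.aestronglyMeasurable ?_
  refine .of_forall fun x => ?_
  simp only [norm_mul, norm_pow, abs_norm, Real.norm_eq_abs, abs_of_pos (Real.exp_pos _)]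
  gcongr
  refine (abs_sub _ _).trans ?_
  gcongr
  rw [abs_pow]
  exact pow_le_pow_left₀ (abs_nonneg _) (norm_deriv_le_of_lipschitz hΦ) 2

end Weight

theorem lithner_agmon_integrand_eq {h : ℝ} (hh : h ≠ 0) (p w v : ℝ) (z z' z'' : ℂ) :
    h ^ 2 * ‖((w * (p / h) : ℝ) : ℂ) * z + (w : ℂ) * z'‖ ^ 2
      + (v - p ^ 2) * w ^ 2 * ‖z‖ ^ 2
      - (((w ^ 2 : ℝ) : ℂ) * ((-(h : ℂ) ^ 2 * z'' + (v : ℂ) * z) * starRingEnd ℂ z)).re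
    = h ^ 2 * (w ^ 2 * (2 * p / h) * (starRingEnd ℂ z * z').re
        + w ^ 2 * (starRingEnd ℂ z' * z' + starRingEnd ℂ z * z'').re) := by
  obtain ⟨a, b⟩ := z
  obtain ⟨c, d⟩ := z'
  obtain ⟨e, f⟩ := z''
  simp only [Complex.sq_norm, Complex.normSq_apply, Complex.mul_re, Complex.mul_im,
    Complex.add_re, Complex.add_im, Complex.ofReal_re, Complex.ofReal_im, Complex.neg_re,
    Complex.neg_im, Complex.conj_re, Complex.conj_im, ← Complex.ofReal_pow]
  field_simp
  ring

theorem lithner_agmon_integrand_ae_eq {h : ℝ} (hh : h ≠ 0) {V Φ : ℝ → ℝ}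
    (hΦ : ∀ᵐ x, DifferentiableAt ℝ Φ x) {u : ℝ → ℂ} (hu : ContDiff ℝ 2 u) :
    (fun x => h ^ 2 * ‖deriv (fun y => (Real.exp (Φ y / h) : ℂ) * u y) x‖ ^ 2
      + (V x - deriv Φ x ^ 2) * Real.exp (2 * Φ x / h) * ‖u x‖ ^ 2
      - ((Real.exp (2 * Φ x / h) : ℂ) * ((-(h : ℂ) ^ 2 * deriv (deriv u) x + (V x : ℂ) * u x)
          * starRingEnd ℂ (u x))).re)
      =ᵐ[volume] fun x => h ^ 2 *
        deriv (fun x => Real.exp (2 * Φ x / h) * (starRingEnd ℂ (u x) * deriv u x).re) x := by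
  filter_upwards [hΦ] with x hx
  have hu_x : DifferentiableAt ℝ u x := hu.differentiable two_ne_zero x
  have hdE := ((hx.hasDerivAt.const_mul 2).div_const h).exp
  have hdg := hu_x.hasDerivAt.re_conj_mul (hu.deriv'.differentiable one_ne_zero x).hasDerivAt
  rw [(hasDerivAt_exp_div_mul hx hu_x).deriv, (hdE.fun_mul hdg).deriv,
    show Real.exp (2 * Φ x / h) = Real.exp (Φ x / h) ^ 2 by rw [← Real.exp_nat_mul]; ring_nf]
  exact lithner_agmon_integrand_eq hh _ _ _ _ _ _

/-- The Lithner–Agmon energy identity for a compactly supported `C²` function: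
`h² ∫ |(e^{Φ/h}u)'|² + ∫ (V - Φ'²) e^{2Φ/h} |u|² = Re ∫ e^{2Φ/h} (Pu) ū`,
where `P = -h²∂ₓ² + V` and `Φ` is Lipschitz (so that `deriv Φ` exists a.e.). -/
theorem lithner_agmon_identity_compact_support
    (h : ℝ) (hh : 0 < h)
    (V : ℝ → ℝ) (hV : Continuous V)
    (Φ : ℝ → ℝ) (hΦ : ∃ K : NNReal, LipschitzWith K Φ)
    (u : ℝ → ℂ) (hu : ContDiff ℝ 2 u) (hsupp : HasCompactSupport u) :
    h ^ 2 * (∫ x : ℝ, ‖deriv (fun y => (Real.exp (Φ y / h) : ℂ) * u y) x‖ ^ 2)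
    + (∫ x : ℝ, (V x - (deriv Φ x) ^ 2) * Real.exp (2 * Φ x / h) * ‖u x‖ ^ 2)
    = (∫ x : ℝ, (Real.exp (2 * Φ x / h) : ℂ) *
        ((-(h : ℂ) ^ 2 * deriv (deriv u) x + (V x : ℂ) * u x) *
          (starRingEnd ℂ) (u x))).re := by
  obtain ⟨K, hK⟩ := hΦ
  have hu1 : ContDiff ℝ 1 u := hu.of_le one_le_two
  have hA := integrable_norm_deriv_exp_div_mul_sq (h := h) hK hu1 hsupp
  have hB := integrable_sub_deriv_sq_mul_exp_mul_norm_sq (h := h) hV hK hu.continuous hsupp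
  have hC : Integrable fun x => (Real.exp (2 * Φ x / h) : ℂ) *
      ((-(h : ℂ) ^ 2 * deriv (deriv u) x + (V x : ℂ) * u x) * starRingEnd ℂ (u x)) := by
    have := hK.continuous; have := hu.deriv'.continuous_deriv le_rfl
    exact Continuous.integrable_of_hasCompactSupport (by fun_prop)
      (hsupp.comp_left (g := starRingEnd ℂ) (map_zero _)).mul_left.mul_left
  have hE : LocallyLipschitz fun x => Real.exp (2 * Φ x / h) :=
    (show ContDiff ℝ 1 fun t => Real.exp (2 * t / h) by fun_prop).locallyLipschitz.comp
      hK.locallyLipschitz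
  have hg : ContDiff ℝ 1 fun x => (starRingEnd ℂ (u x) * deriv u x).re :=
    Complex.reCLM.contDiff.comp ((Complex.conjCLE.contDiff.comp hu1).mul hu.deriv')
  have hFTC := hE.integral_deriv_mul_eq_zero hg.locallyLipschitz
    (hsupp.deriv.mul_left.comp_left (g := Complex.re) rfl)
  have hint := integral_congr_ae (lithner_agmon_integrand_ae_eq hh.ne' (V := V)
    hK.ae_differentiableAt hu)
  -- the ascription on `hC.re` turns `RCLike.re` into `Complex.re`, so that the rewrite matches
  rw [integral_sub ((hA.const_mul _).fun_add hB) (hC.re : Integrable fun x : ℝ => (_ : ℂ).re),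
    integral_add (hA.const_mul _) hB, integral_const_mul, integral_const_mul, hFTC,
    mul_zero] at hint
  exact (sub_eq_zero.mp hint).trans (integral_re hC)
end

section
/- Let h > 0, let V : ℝ → ℝ be continuous and bounded, let Φ : ℝ → ℝ be Lipschitz and constant outside some compact set, and let u : ℝ → ℂ be twice continuously differentiable with u ∈ L²(ℝ) and u'' ∈ L²(ℝ). Then h² ∫_ℝ |(e^{Φ/h} u)'(x)|² dx + ∫_ℝ ( V(x) − Φ'(x)² ) e^{2Φ(x)/h} |u(x)|² dx = Re ∫_ℝ e^{2Φ(x)/h} ( −h² u''(x) + V(x) u(x) ) · conj(u(x)) dx, where Φ' denotes the almost-everywhere derivative of Φ. -/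
/-!
Write `W = exp (2Φ/h)` and `H = ⟪u, u'⟫`. Wherever `Φ` is differentiable, expanding
`‖(e^{Φ/h} u)'‖²` shows that the left integrand minus the right one is `h² (W H)'`.
Since `W` is bounded and absolutely continuous on compact intervals, `∫ (W H)' = 0` as soon as
`H` and `H' = ‖u'‖² + ⟪u, u''⟫` are integrable, i.e. as soon as `u' ∈ L²`. This follows from
`u, u'' ∈ L²`: if `∫₀^b ‖u'‖²` were unbounded, then `H` and hence `‖u‖²`, whose derivative
is `2H`, would tend to `+∞`.
-/

open MeasureTheory Set Filter Topology
open scoped InnerProductSpace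

theorem MeasureTheory.Integrable.not_tendsto_atTop {g : ℝ → ℝ} (hg : Integrable g) :
    ¬ Tendsto g atTop atTop := by
  intro hlim
  obtain ⟨M, hM⟩ := eventually_atTop.1 (hlim.eventually_gt_atTop 1)
  have hsub : Ici M ⊆ {x | 1 < |g x|} := fun x hx => (hM x hx).trans_le (le_abs_self _)
  have := (measure_mono hsub).trans_lt (hg.abs.measure_gt_lt_top one_pos)
  simp at this

theorem tendsto_atTop_of_hasDerivAt_of_tendsto_atTop {f f' : ℝ → ℝ}
    (hf : ∀ x, HasDerivAt f (f' x) x) (hf' : Tendsto f' atTop atTop) :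
    Tendsto f atTop atTop := by
  obtain ⟨M, hM⟩ := eventually_atTop.1 (hf'.eventually_ge_atTop 1)
  have hgrowth : ∀ x ∈ Ici M, f M + (x - M) ≤ f x := fun x hx => by
    have := (convex_Ici M).mul_sub_le_image_sub_of_le_deriv
      (fun y _ => (hf y).continuousAt.continuousWithinAt)
      (fun y _ => (hf y).differentiableAt.differentiableWithinAt)
      (fun y hy => by rw [interior_Ici] at hy; rw [(hf y).deriv]; exact hM y hy.out.le)
      M self_mem_Ici x hx hx
    linarith
  exact tendsto_atTop_mono' _ (eventually_atTop.2 ⟨M, hgrowth⟩)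
    (tendsto_atTop_add_const_left _ _ (tendsto_atTop_add_const_right _ _ tendsto_id))

theorem MeasureTheory.MemLp.integrable_inner {α E : Type*} [MeasurableSpace α] {μ : Measure α}
    [NormedAddCommGroup E] [InnerProductSpace ℝ E] {f g : α → E}
    (hf : MemLp f 2 μ) (hg : MemLp g 2 μ) : Integrable (fun x => ⟪f x, g x⟫_ℝ) μ :=
  (L2.integrable_inner (hf.toLp f) (hg.toLp g)).congr <| by
    filter_upwards [hf.coeFn_toLp, hg.coeFn_toLp] with x hfx hgx
    rw [hfx, hgx]

section SecondDerivative

variable {E : Type*} [NormedAddCommGroup E] [InnerProductSpace ℝ E] {u : ℝ → E}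

theorem ContDiff.hasDerivAt_deriv (hu : ContDiff ℝ 2 u) (x : ℝ) :
    HasDerivAt (deriv u) (deriv (deriv u) x) x :=
  ((hu.iterate_deriv' 1 1).differentiable one_ne_zero x).hasDerivAt

theorem ContDiff.hasDerivAt_inner_deriv (hu : ContDiff ℝ 2 u) (x : ℝ) :
    HasDerivAt (fun y => ⟪u y, deriv u y⟫_ℝ)
      (‖deriv u x‖ ^ 2 + ⟪u x, deriv (deriv u) x⟫_ℝ) x := by
  refine ((hu.differentiable two_ne_zero x).hasDerivAt.inner ℝ
    (hu.hasDerivAt_deriv x)).congr_deriv ?_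
  rw [real_inner_self_eq_norm_sq, add_comm]

theorem ContDiff.integrableOn_Ioi_norm_deriv_sq (hu : ContDiff ℝ 2 u)
    (hu0 : MemLp u 2) (hu2 : MemLp (deriv (deriv u)) 2) :
    IntegrableOn (fun x => ‖deriv u x‖ ^ 2) (Ioi 0) := by
  have hcont : Continuous fun x => ‖deriv u x‖ ^ 2 := (hu.continuous_deriv one_le_two).norm.pow 2
  set J := fun b => ∫ x in (0 : ℝ)..b, ‖deriv u x‖ ^ 2
  have hJ_mono : Monotone J := fun a b hab => by
    have := intervalIntegral.integral_add_adjacent_intervals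
      (hcont.intervalIntegrable (μ := volume) 0 a) (hcont.intervalIntegrable a b)
    simp only [J]
    linarith [intervalIntegral.integral_nonneg (μ := volume) hab fun x _ => sq_nonneg ‖deriv u x‖]
  by_cases hbdd : BddAbove (range J)
  · obtain ⟨I, hI⟩ := hbdd
    refine integrableOn_Ioi_of_intervalIntegral_norm_bounded I 0
      (fun _ => hcont.integrableOn_Ioc) tendsto_id (Eventually.of_forall fun b => ?_)
    simpa using hI (mem_range_self b)
  exfalso
  set φ := fun x => ⟪u x, deriv (deriv u) x⟫_ℝ
  have hφ : Integrable φ := hu0.integrable_inner hu2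
  have hH : Tendsto (fun b => ⟪u b, deriv u b⟫_ℝ) atTop atTop := by
    have hJ : Tendsto J atTop atTop :=
      hJ_mono.tendsto_atTop_atTop fun b =>
        let ⟨_, ⟨a, ha⟩, hb⟩ := not_bddAbove_iff.1 hbdd b; ⟨a, ha ▸ hb.le⟩
    refine ((hJ.atTop_add (intervalIntegral_tendsto_integral_Ioi 0 hφ.integrableOn
      tendsto_id)).atTop_add (tendsto_const_nhds (x := ⟪u 0, deriv u 0⟫_ℝ))).congr fun b => ?_
    have hftc := intervalIntegral.integral_eq_sub_of_hasDerivAt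
      (fun x _ => hu.hasDerivAt_inner_deriv x) ((hcont.add (by fun_prop)).intervalIntegrable 0 b)
    rw [intervalIntegral.integral_add (hcont.intervalIntegrable 0 b)
      (hφ.intervalIntegrable)] at hftc
    simp only [J, id]
    linarith
  have hG : Tendsto (fun x => ‖u x‖ ^ 2) atTop atTop :=
    tendsto_atTop_of_hasDerivAt_of_tendsto_atTop
      (fun x => (hu.differentiable two_ne_zero x).hasDerivAt.norm_sq)
      (hH.const_mul_atTop two_pos)
  exact (memLp_two_iff_integrable_sq_norm hu0.1).1 hu0 |>.not_tendsto_atTop hG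

theorem ContDiff.memLp_two_deriv (hu : ContDiff ℝ 2 u)
    (hu0 : MemLp u 2) (hu2 : MemLp (deriv (deriv u)) 2) : MemLp (deriv u) 2 := by
  have hneg := Measure.measurePreserving_neg (volume : Measure ℝ)
  have hv : ContDiff ℝ 2 (fun x => u (-x)) := hu.comp contDiff_neg
  have hv0 : MemLp (fun x => u (-x)) 2 := hu0.comp_measurePreserving hneg
  have hd : deriv (fun x => u (-x)) = fun x => -deriv u (-x) := funext fun x => deriv_comp_neg ..
  have hv2 : MemLp (deriv (deriv fun x => u (-x))) 2 := by
    have hdd : deriv (deriv fun x => u (-x)) = fun x => deriv (deriv u) (-x) := by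
      rw [hd]; funext x; rw [deriv.fun_neg, deriv_comp_neg, neg_neg]
    rw [hdd]; exact hu2.comp_measurePreserving hneg
  have hleft : IntegrableOn (fun x => ‖deriv u x‖ ^ 2) (Iio 0) := by
    have hright : IntegrableOn (fun x => ‖deriv u (-x)‖ ^ 2) (Ioi (-0)) := by
      simpa [hd] using hv.integrableOn_Ioi_norm_deriv_sq hv0 hv2
    simpa only [neg_neg] using hright.comp_neg_Iio
  rw [memLp_two_iff_integrable_sq_norm (hu.continuous_deriv one_le_two).aestronglyMeasurable,
    ← integrableOn_univ, ← Iio_union_Ici (a := (0 : ℝ))]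
  exact hleft.union ((integrableOn_Ici_iff_integrableOn_Ioi).2
    (hu.integrableOn_Ioi_norm_deriv_sq hu0 hu2))

end SecondDerivative

theorem integral_deriv_eq_sub_of_absolutelyContinuousOnInterval {F : ℝ → ℝ} {m n : ℝ}
    (hF : ∀ a b, AbsolutelyContinuousOnInterval F a b) (hF' : Integrable (deriv F))
    (hbot : Tendsto F atBot (𝓝 m)) (htop : Tendsto F atTop (𝓝 n)) :
    ∫ x, deriv F x = n - m := by
  refine tendsto_nhds_unique
    (intervalIntegral_tendsto_integral hF' tendsto_neg_atTop_atBot tendsto_id) ?_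
  simp_rw [(hF _ _).integral_deriv_eq_sub]
  exact htop.sub (hbot.comp tendsto_neg_atTop_atBot)

theorem ContDiff.absolutelyContinuousOnInterval_comp {X : Type*} [NormedAddCommGroup X]
    [NormedSpace ℝ X] {g : ℝ → X} (hg : ContDiff ℝ 1 g) {f : ℝ → ℝ} {K : NNReal} {a b : ℝ}
    (hf : LipschitzOnWith K f (uIcc a b)) : AbsolutelyContinuousOnInterval (g ∘ f) a b := by
  obtain ⟨C, hC⟩ := isCompact_uIcc.exists_bound_of_continuousOn hf.continuousOn
  obtain ⟨Kg, hKg⟩ :=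
    hg.contDiffOn.exists_lipschitzOnWith one_ne_zero (convex_Icc (-C) C) isCompact_Icc
  exact (hKg.comp hf fun x hx => abs_le.1 (hC x hx)).absolutelyContinuousOnInterval

theorem Continuous.exists_bound_of_eq_const_off_compact {X F : Type*} [TopologicalSpace X]
    [NormedAddCommGroup F] {f : X → F} (hf : Continuous f) {K : Set X} (hK : IsCompact K)
    {c : F} (hc : ∀ x ∉ K, f x = c) : ∃ B, ∀ x, ‖f x‖ ≤ B := by
  obtain ⟨C, hC⟩ := hK.exists_bound_of_continuousOn hf.continuousOn
  refine ⟨max C ‖c‖, fun x => ?_⟩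
  by_cases hx : x ∈ K
  · exact (hC x hx).trans (le_max_left _ _)
  · rw [hc x hx]
    exact le_max_right _ _

theorem Real.norm_exp_two_mul_div_le {t B : ℝ} (ht : |t| ≤ B) (h : ℝ) :
    ‖Real.exp (2 * t / h)‖ ≤ Real.exp (2 * B / |h|) := by
  rw [Real.norm_of_nonneg (Real.exp_pos _).le]
  refine Real.exp_le_exp.2 ((le_abs_self _).trans ?_)
  rw [abs_div, abs_mul, abs_two]
  gcongr

section AgmonIdentity

variable {E : Type*} [NormedAddCommGroup E] [InnerProductSpace ℝ E] {u : ℝ → E} {Φ : ℝ → ℝ}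
  {h x : ℝ}

theorem hasDerivAt_exp_div_smul (hΦ : DifferentiableAt ℝ Φ x) (hu : DifferentiableAt ℝ u x) :
    HasDerivAt (fun y => Real.exp (Φ y / h) • u y)
      (Real.exp (Φ x / h) • ((deriv Φ x / h) • u x + deriv u x)) x := by
  refine ((hΦ.hasDerivAt.div_const h).exp.smul hu.hasDerivAt).congr_deriv ?_
  rw [smul_add, smul_smul, add_comm]

theorem hasDerivAt_exp_mul_inner_deriv (hΦ : DifferentiableAt ℝ Φ x) (hu : ContDiff ℝ 2 u) :
    HasDerivAt (fun y => Real.exp (2 * Φ y / h) * ⟪u y, deriv u y⟫_ℝ)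
      (Real.exp (2 * Φ x / h) * (2 * deriv Φ x / h * ⟪u x, deriv u x⟫_ℝ
        + (‖deriv u x‖ ^ 2 + ⟪u x, deriv (deriv u) x⟫_ℝ))) x :=
  (((hΦ.hasDerivAt.const_mul 2).div_const h).exp.mul (hu.hasDerivAt_inner_deriv x)).congr_deriv
    (by ring)

theorem agmon_pointwise_identity (hh : h ≠ 0) (t p v : ℝ) (a b c : E) :
    h ^ 2 * ‖Real.exp (t / h) • ((p / h) • a + b)‖ ^ 2
      + (v - p ^ 2) * Real.exp (2 * t / h) * ‖a‖ ^ 2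
      = Real.exp (2 * t / h) * ⟪a, -(h ^ 2) • c + v • a⟫_ℝ
        + h ^ 2 * (Real.exp (2 * t / h) * (2 * p / h * ⟪a, b⟫_ℝ + (‖b‖ ^ 2 + ⟪a, c⟫_ℝ))) := by
  have hexp : Real.exp (t / h) ^ 2 = Real.exp (2 * t / h) := by
    rw [← Real.exp_nat_mul]; ring_nf
  rw [norm_smul, mul_pow, Real.norm_eq_abs, sq_abs, hexp, norm_add_sq_real, norm_smul,
    mul_pow, Real.norm_eq_abs, sq_abs, inner_smul_left, inner_add_right, inner_smul_right,
    inner_smul_right, real_inner_self_eq_norm_sq]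
  simp only [conj_trivial]
  field_simp
  ring

theorem integrable_deriv_exp_mul_inner_deriv {B : ℝ} {K : NNReal} (hΦ : LipschitzWith K Φ)
    (hΦbdd : ∀ x, |Φ x| ≤ B) (hu : ContDiff ℝ 2 u) (hu0 : MemLp u 2)
    (hu2 : MemLp (deriv (deriv u)) 2) :
    Integrable (deriv fun x => Real.exp (2 * Φ x / h) * ⟪u x, deriv u x⟫_ℝ) := by
  have hu1 := hu.memLp_two_deriv hu0 hu2
  have hΦ' : ∀ x, ‖2 * deriv Φ x / h‖ ≤ 2 * K / |h| := fun x => by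
    rw [norm_div, norm_mul, Real.norm_eq_abs h, Real.norm_two]
    gcongr
    exact norm_deriv_le_of_lipschitz hΦ
  refine Integrable.congr ?_ <| hΦ.ae_differentiableAt.mono fun x hx =>
    (hasDerivAt_exp_mul_inner_deriv (h := h) hx hu).deriv.symm
  refine (((hu0.integrable_inner hu1).bdd_mul ?_ (ae_of_all _ hΦ')).add
    (((memLp_two_iff_integrable_sq_norm hu1.1).1 hu1).add (hu0.integrable_inner hu2))).bdd_mul
    (by have := hΦ.continuous; fun_prop)
    (ae_of_all _ fun x => Real.norm_exp_two_mul_div_le (hΦbdd x) h)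
  exact (((measurable_deriv Φ).const_mul 2).div_const h).aestronglyMeasurable

theorem integral_deriv_exp_mul_inner_deriv {B : ℝ} {K : NNReal} (hΦ : LipschitzWith K Φ)
    (hΦbdd : ∀ x, |Φ x| ≤ B) (hu : ContDiff ℝ 2 u) (hu0 : MemLp u 2)
    (hu2 : MemLp (deriv (deriv u)) 2) :
    ∫ x, deriv (fun x => Real.exp (2 * Φ x / h) * ⟪u x, deriv u x⟫_ℝ) x = 0 := by
  have hu1 := hu.memLp_two_deriv hu0 hu2
  have hH := hu0.integrable_inner hu1
  have hH' := ((memLp_two_iff_integrable_sq_norm hu1.1).1 hu1).add (hu0.integrable_inner hu2)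
  have hWac (a b : ℝ) : AbsolutelyContinuousOnInterval (fun x => Real.exp (2 * Φ x / h)) a b :=
    ContDiff.absolutelyContinuousOnInterval_comp (g := fun t => Real.exp (2 * t / h))
      (by fun_prop) (hΦ.lipschitzOnWith (s := uIcc a b))
  have hHac (a b : ℝ) : AbsolutelyContinuousOnInterval (fun x => ⟪u x, deriv u x⟫_ℝ) a b :=
    ((hu.of_le one_le_two).inner ℝ
      (hu.iterate_deriv' 1 1)).contDiffOn.absolutelyContinuousOnInterval
  have hWb {l : Filter ℝ} : IsBoundedUnder (· ≤ ·) l (norm ∘ fun x => Real.exp (2 * Φ x / h)) :=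
    isBoundedUnder_of ⟨_, fun x => Real.norm_exp_two_mul_div_le (hΦbdd x) h⟩
  have hbot := isBoundedUnder_le_mul_tendsto_zero hWb
    (tendsto_zero_of_hasDerivAt_of_integrableOn_Iic (a := 0)
      (fun x _ => hu.hasDerivAt_inner_deriv x) hH'.integrableOn hH.integrableOn)
  have htop := isBoundedUnder_le_mul_tendsto_zero hWb
    (tendsto_zero_of_hasDerivAt_of_integrableOn_Ioi (a := 0)
      (fun x _ => hu.hasDerivAt_inner_deriv x) hH'.integrableOn hH.integrableOn)
  simpa using integral_deriv_eq_sub_of_absolutelyContinuousOnInterval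
    (fun a b => (hWac a b).fun_mul (hHac a b))
    (integrable_deriv_exp_mul_inner_deriv hΦ hΦbdd hu hu0 hu2) hbot htop

theorem integral_agmon_identity {V : ℝ → ℝ} {M B : ℝ} {K : NNReal} (hh : h ≠ 0)
    (hV : Measurable V) (hVbdd : ∀ x, |V x| ≤ M) (hΦ : LipschitzWith K Φ)
    (hΦbdd : ∀ x, |Φ x| ≤ B) (hu : ContDiff ℝ 2 u) (hu0 : MemLp u 2)
    (hu2 : MemLp (deriv (deriv u)) 2) :
    h ^ 2 * (∫ x, ‖deriv (fun y => Real.exp (Φ y / h) • u y) x‖ ^ 2)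
      + ∫ x, (V x - deriv Φ x ^ 2) * Real.exp (2 * Φ x / h) * ‖u x‖ ^ 2
      = ∫ x, Real.exp (2 * Φ x / h) * ⟪u x, -(h ^ 2) • deriv (deriv u) x + V x • u x⟫_ℝ := by
  set W : ℝ → ℝ := fun x => Real.exp (2 * Φ x / h)
  set F : ℝ → ℝ := fun x => W x * ⟪u x, deriv u x⟫_ℝ
  set f₂ : ℝ → ℝ := fun x => (V x - deriv Φ x ^ 2) * W x * ‖u x‖ ^ 2
  set f₃ : ℝ → ℝ := fun x => W x * ⟪u x, -(h ^ 2) • deriv (deriv u) x + V x • u x⟫_ℝ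
  have hW : AEStronglyMeasurable W := by have := hΦ.continuous; fun_prop
  have hWbdd : ∀ x, ‖W x‖ ≤ Real.exp (2 * B / |h|) :=
    fun x => Real.norm_exp_two_mul_div_le (hΦbdd x) h
  have hF' := integrable_deriv_exp_mul_inner_deriv (h := h) hΦ hΦbdd hu hu0 hu2
  have hf₂ : Integrable f₂ := by
    refine ((memLp_two_iff_integrable_sq_norm hu0.1).1 hu0).bdd_mul
      (c := (M + K ^ 2) * Real.exp (2 * B / |h|)) ?_ (ae_of_all _ fun x => ?_)
    · exact ((hV.sub ((measurable_deriv Φ).pow_const 2)).aestronglyMeasurable.mul hW)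
    have hM : 0 ≤ M := (abs_nonneg _).trans (hVbdd 0)
    rw [norm_mul]
    gcongr
    · refine (norm_sub_le _ _).trans (add_le_add ((Real.norm_eq_abs _).trans_le (hVbdd x)) ?_)
      rw [norm_pow]
      gcongr
      exact norm_deriv_le_of_lipschitz hΦ
    · exact hWbdd x
  have hVtop : MemLp V ⊤ := memLp_top_of_bound hV.aestronglyMeasurable M (ae_of_all _ hVbdd)
  have hf₃ : Integrable f₃ :=
    (hu0.integrable_inner ((hu2.const_smul _).add (hu0.smul hVtop))).bdd_mul hW
      (ae_of_all _ hWbdd)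
  have hpointwise : ∀ᵐ x, h ^ 2 * ‖deriv (fun y => Real.exp (Φ y / h) • u y) x‖ ^ 2
      = f₃ x + h ^ 2 * deriv F x - f₂ x := by
    filter_upwards [hΦ.ae_differentiableAt] with x hx
    rw [(hasDerivAt_exp_div_smul hx (hu.differentiable two_ne_zero x)).deriv,
      (hasDerivAt_exp_mul_inner_deriv hx hu).deriv]
    linarith [agmon_pointwise_identity hh (Φ x) (deriv Φ x) (V x) (u x) (deriv u x)
      (deriv (deriv u) x)]
  rw [← integral_const_mul, integral_congr_ae hpointwise, integral_sub _ hf₂,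
    integral_add hf₃ (hF'.const_mul _), integral_const_mul,
    integral_deriv_exp_mul_inner_deriv hΦ hΦbdd hu hu0 hu2]
  · ring
  · exact hf₃.add (hF'.const_mul _)

end AgmonIdentity

/-- The Lithner–Agmon energy identity for `u ∈ C²(ℝ)` with `u, u'' ∈ L²`,
when the Lipschitz phase `Φ` is constant outside a compact set. -/
theorem lithner_agmon_identity
    (h : ℝ) (hh : 0 < h)
    (V : ℝ → ℝ) (hV : Continuous V) (hVbdd : ∃ M, ∀ x, |V x| ≤ M)
    (Φ : ℝ → ℝ) (hΦ : ∃ K : NNReal, LipschitzWith K Φ)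
    (hΦconst : ∃ (K : Set ℝ) (c : ℝ), IsCompact K ∧ ∀ x ∉ K, Φ x = c)
    (u : ℝ → ℂ) (hu : ContDiff ℝ 2 u)
    (huL2 : MemLp u 2 (volume : Measure ℝ))
    (hu''L2 : MemLp (deriv (deriv u)) 2 (volume : Measure ℝ)) :
    h ^ 2 * (∫ x : ℝ, ‖deriv (fun y => (Real.exp (Φ y / h) : ℂ) * u y) x‖ ^ 2)
    + (∫ x : ℝ, (V x - (deriv Φ x) ^ 2) * Real.exp (2 * Φ x / h) * ‖u x‖ ^ 2)
    = (∫ x : ℝ, (Real.exp (2 * Φ x / h) : ℂ) *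
        ((-(h : ℂ) ^ 2 * deriv (deriv u) x + (V x : ℂ) * u x) *
          (starRingEnd ℂ) (u x))).re := by
  obtain ⟨K, hΦ⟩ := hΦ
  obtain ⟨S, c, hS, hΦc⟩ := hΦconst
  obtain ⟨B, hB⟩ := hΦ.continuous.exists_bound_of_eq_const_off_compact hS hΦc
  obtain ⟨M, hM⟩ := hVbdd
  have hVtop : MemLp (fun x => (V x : ℂ)) ⊤ :=
    memLp_top_of_bound (by fun_prop) M (ae_of_all _ fun x => by simpa using hM x)
  have hPu : MemLp (fun x => -(h : ℂ) ^ 2 * deriv (deriv u) x + (V x : ℂ) * u x) 2 :=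
    (hu''L2.const_mul _).add (huL2.mul' hVtop)
  have hint : Integrable fun x => (Real.exp (2 * Φ x / h) : ℂ) *
      ((-(h : ℂ) ^ 2 * deriv (deriv u) x + (V x : ℂ) * u x) * (starRingEnd ℂ) (u x)) := by
    have := hΦ.continuous
    refine (hPu.integrable_mul huL2.star).bdd_mul (c := Real.exp (2 * B / |h|)) (by fun_prop)
      (ae_of_all _ fun x => ?_)
    rw [Complex.norm_real]
    exact Real.norm_exp_two_mul_div_le (hB x) h
  have key := integral_agmon_identity hh.ne' hV.measurable hM hΦ hB hu huL2 hu''L2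
  simp_rw [Complex.real_smul] at key
  rw [key]
  refine (integral_congr_ae (ae_of_all _ fun x => ?_)).trans (integral_re hint)
  simp only [Complex.inner, RCLike.re_to_complex, Complex.re_ofReal_mul, Complex.ofReal_neg,
    Complex.ofReal_pow]
end
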